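/- arXiv:2405.13248 — 2 statements merged into one kernel-verified Lean document; each statement's English description precedes it below -/
import Mathlib

section
/- Let R be a finite ring with |R| = q and suppose H_1 = {x ∈ R^d : x_1 x_2 ⋯ x_d = 1} is C-Salem. Then every proper left ideal (and proper right ideal) I of R satisfies |I| ≤ C·q / |R^×|^{(d-1)/2}. -/
/-!
If no difference of two points of `E ⊆ G` lies in `H`, then `∑_ψ Ĥ(ψ) |Ê(ψ)|² = 0`, where
`Ĥ(ψ) = ∑_{h ∈ H} ψ h`. The trivial character contributes `|H| |E|²`; bounding the other terms
by `K |Ê(ψ)|²` and applying Parseval gives `|H| |E| ≤ K |G|`.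

Take `G = R^d`, `H = H_1` and, for a proper left ideal `I`, `E = {x : x_d ∈ I}`: for `x, y ∈ E`
the product of the coordinates of `x - y` lies in `I`, so it is not `1`. Every coordinate of a
point of `H_1` is a unit (a finite ring is Dedekind-finite), so `|H_1| = |R^×|^{d-1}`, while
`|E| = |I| q^{d-1}`. For a right ideal take `E = {x : x_1 ∈ I}`.
-/

open Finset ComplexConjugate

/-- The paper's `|Ĥ(ψ)| ≤ C q^{-d} |H|^{1/2}`, with the normalisation `q^{-d}` of `Ĥ` cleared. -/
def IsSalem {G : Type*} [AddCommGroup G] (H : Finset G) (C : ℝ) : Prop :=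
  ∀ ψ : AddChar G ℂ, ψ ≠ 1 → ‖∑ h ∈ H, ψ h‖ ≤ C * (#H : ℝ) ^ ((1 : ℝ) / 2)

theorem IsSalem.nonneg {G : Type*} [AddCommGroup G] [Finite G] [Nontrivial G] {H : Finset G}
    {C : ℝ} (hH : IsSalem H C) : 0 ≤ C * (#H : ℝ) ^ ((1 : ℝ) / 2) := by
  obtain ⟨a, ha⟩ := exists_ne (0 : G)
  obtain ⟨ψ, hψ⟩ := AddChar.exists_apply_ne_zero.2 ha
  exact (norm_nonneg _).trans (hH ψ fun h => hψ (h ▸ AddChar.one_apply a))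

def unitHyperbola (M : Type*) [Monoid M] [Fintype M] [DecidableEq M] (d : ℕ) :
    Finset (Fin d → M) :=
  {x | (List.ofFn x).prod = 1}

@[simp]
theorem mem_unitHyperbola {M : Type*} [Monoid M] [Fintype M] [DecidableEq M] {d : ℕ}
    {x : Fin d → M} : x ∈ unitHyperbola M d ↔ (List.ofFn x).prod = 1 := by
  simp [unitHyperbola]

namespace AddChar

variable {G : Type*} [AddCommGroup G] [Fintype G]

theorem sum_mul_conj_sum (ψ : AddChar G ℂ) (E : Finset G) :
    (∑ x ∈ E, ψ x) * conj (∑ y ∈ E, ψ y) = ∑ x ∈ E, ∑ y ∈ E, ψ (x - y) := by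
  simp_rw [map_sum, sum_mul_sum, ← map_neg_eq_conj, ← map_add_eq_mul, sub_eq_add_neg]

variable [DecidableEq G]

theorem sum_norm_sum_sq (E : Finset G) :
    ∑ ψ : AddChar G ℂ, ‖∑ x ∈ E, ψ x‖ ^ 2 = Fintype.card G * #E := by
  have key : ∑ ψ : AddChar G ℂ, (‖∑ x ∈ E, ψ x‖ : ℂ) ^ 2 = Fintype.card G * #E := by
    simp_rw [← Complex.mul_conj', sum_mul_conj_sum]
    rw [sum_comm]
    simp_rw [sum_comm (s := univ), sum_apply_eq_ite, sub_eq_zero]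
    simp [mul_comm]
  exact_mod_cast key

theorem sum_sum_mul_norm_sum_sq_eq_zero {H E : Finset G}
    (hE : ∀ x ∈ E, ∀ y ∈ E, x - y ∉ H) :
    ∑ ψ : AddChar G ℂ, (∑ h ∈ H, ψ h) * (‖∑ x ∈ E, ψ x‖ : ℂ) ^ 2 = 0 := by
  simp_rw [← Complex.mul_conj', sum_mul_conj_sum, mul_sum, sum_mul, ← map_add_eq_mul]
  rw [sum_comm]
  refine sum_eq_zero fun x hx => ?_
  rw [sum_comm]
  refine sum_eq_zero fun y hy => ?_
  rw [sum_comm]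
  refine sum_eq_zero fun h _ => ?_
  rw [sum_apply_eq_ite, if_neg]
  intro hzero
  exact hE y hy x hx (by rwa [← neg_sub, ← eq_neg_of_add_eq_zero_left hzero])

end AddChar

theorem card_mul_card_le_of_forall_sub_notMem {G : Type*} [AddCommGroup G] [Fintype G]
    [DecidableEq G] {H E : Finset G} {K : ℝ} (hK : 0 ≤ K)
    (hH : ∀ ψ : AddChar G ℂ, ψ ≠ 1 → ‖∑ h ∈ H, ψ h‖ ≤ K)
    (hE : ∀ x ∈ E, ∀ y ∈ E, x - y ∉ H) :
    (#H : ℝ) * #E ≤ K * Fintype.card G := by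
  set F : AddChar G ℂ → ℝ := fun ψ => ‖∑ x ∈ E, ψ x‖ ^ 2
  have hsplit :
      ((#H * #E ^ 2 : ℝ) : ℂ) + ∑ ψ ∈ univ.erase 1, (∑ h ∈ H, ψ h) * (F ψ : ℂ) = 0 := by
    rw [← AddChar.sum_sum_mul_norm_sum_sq_eq_zero hE, ← add_sum_erase _ _ (mem_univ 1)]
    simp [F]
  have hmain : (#H : ℝ) * #E ^ 2 ≤ K * (Fintype.card G * #E) :=
    calc (#H : ℝ) * #E ^ 2 = ‖∑ ψ ∈ univ.erase 1, (∑ h ∈ H, ψ h) * (F ψ : ℂ)‖ := by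
          rw [← norm_neg, ← eq_neg_of_add_eq_zero_left hsplit, Complex.norm_real,
            Real.norm_of_nonneg (by positivity)]
      _ ≤ ∑ ψ ∈ univ.erase 1, K * F ψ := by
          refine (norm_sum_le _ _).trans (sum_le_sum fun ψ hψ => ?_)
          rw [norm_mul, Complex.norm_real, Real.norm_of_nonneg (by positivity)]
          exact mul_le_mul_of_nonneg_right (hH ψ (ne_of_mem_erase hψ)) (by positivity)
      _ ≤ ∑ ψ, K * F ψ :=
          sum_le_sum_of_subset_of_nonneg (subset_univ _) fun ψ _ _ => by positivity
      _ = K * (Fintype.card G * #E) := by rw [← mul_sum, AddChar.sum_norm_sum_sq]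
  rcases E.eq_empty_or_nonempty with rfl | hne
  · simpa using mul_nonneg hK (Nat.cast_nonneg _)
  · have : (0 : ℝ) < #E := by exact_mod_cast hne.card_pos
    nlinarith

theorem isUnit_of_mem_of_list_prod_eq_one {M : Type*} [Monoid M] [IsDedekindFiniteMonoid M]
    {l : List M} (hl : l.prod = 1) {a : M} (ha : a ∈ l) : IsUnit a := by
  obtain ⟨s, t, rfl⟩ := List.append_of_mem ha
  rw [List.prod_append, List.prod_cons, mul_eq_one_comm, mul_assoc] at hl
  exact IsUnit.of_mul_eq_one _ hl

theorem Units.val_prod_ofFn {M : Type*} [Monoid M] {d : ℕ} (u : Fin d → Mˣ) :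
    ((List.ofFn u).prod : M) = (List.ofFn fun j => (u j : M)).prod := by
  rw [← Units.coeHom_apply, ← List.prod_hom, List.map_ofFn]
  rfl

theorem card_unitHyperbola_of_group {G : Type*} [Group G] [Fintype G] [DecidableEq G] (d : ℕ) :
    #(unitHyperbola G d) = Fintype.card G ^ (d - 1) := by
  rw [← Equiv.Perm.VectorsProdEqOne.card, unitHyperbola, ← Fintype.card_subtype]
  exact Fintype.card_congr <| (Equiv.vectorEquivFin G d).symm.subtypeEquiv fun u => by
    simp [Equiv.Perm.vectorsProdEqOne, Equiv.vectorEquivFin]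

theorem card_unitHyperbola {M : Type*} [Monoid M] [Fintype M] [DecidableEq M] (d : ℕ) :
    #(unitHyperbola M d) = Fintype.card Mˣ ^ (d - 1) := by
  rw [← card_unitHyperbola_of_group]
  symm
  refine card_bij (fun u _ j => (u j : M)) (fun u hu => ?_) (fun u _ v _ huv => ?_) fun x hx => ?_
  · simp_all [← Units.val_prod_ofFn]
  · exact funext fun j => Units.ext (congrFun huv j)
  · have hunit (j : Fin d) : IsUnit (x j) :=
      isUnit_of_mem_of_list_prod_eq_one (mem_unitHyperbola.1 hx) (List.mem_ofFn.2 ⟨j, rfl⟩)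
    refine ⟨fun j => (hunit j).unit, ?_, funext fun j => (hunit j).unit_spec⟩
    simpa [← Units.val_eq_one, Units.val_prod_ofFn] using hx

theorem card_filter_apply_mem {ι α : Type*} [Fintype ι] [DecidableEq ι] [Fintype α]
    [DecidableEq α] (i : ι) (S : Finset α) :
    #{x : ι → α | x i ∈ S} = #S * Fintype.card α ^ (Fintype.card ι - 1) := by
  have hpi : ({x : ι → α | x i ∈ S} : Finset _) =
      Fintype.piFinset (Function.update (fun _ => univ) i S) := by
    ext x
    simp only [mem_filter, mem_univ, true_and, Fintype.mem_piFinset]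
    refine ⟨fun hx j => ?_, fun hx => by simpa using hx i⟩
    rcases eq_or_ne j i with rfl | hj <;> simp [*]
  calc _ = ∏ j, Function.update (fun _ => Fintype.card α) i #S j := by
          rw [hpi, Fintype.card_piFinset]
          exact Fintype.prod_congr _ _ fun j ↦ by obtain rfl | hji := eq_or_ne j i <;> simp [*]
    _ = _ := by simp [prod_update_of_mem, card_sdiff]

theorem card_le_of_isSalem_unitHyperbola {R : Type*} [Ring R] [Fintype R] [DecidableEq R]
    {d : ℕ} {C : ℝ} (hH : IsSalem (unitHyperbola R d) C) (S : AddSubgroup R) (hS : (1 : R) ∉ S)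
    (i : Fin d) (hprod : ∀ x : Fin d → R, x i ∈ S → (List.ofFn x).prod ∈ S) :
    (Nat.card S : ℝ) ≤ C * Fintype.card R / (Fintype.card Rˣ : ℝ) ^ (((d : ℝ) - 1) / 2) := by
  classical
  obtain ⟨n, rfl⟩ := Nat.exists_eq_add_one_of_ne_zero i.pos.ne'
  have : Nontrivial R := ⟨0, 1, fun h => hS (h ▸ S.zero_mem)⟩
  set E : Finset (Fin (n + 1) → R) := {x | x i ∈ (S : Set R).toFinset}
  have hE : ∀ x ∈ E, ∀ y ∈ E, x - y ∉ unitHyperbola R (n + 1) := by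
    intro x hx y hy hxy
    simp only [E, mem_filter, mem_univ, true_and, Set.mem_toFinset, SetLike.mem_coe] at hx hy
    exact hS (mem_unitHyperbola.1 hxy ▸ hprod _ (S.sub_mem hx hy))
  have hcardE : #E = Nat.card S * Fintype.card R ^ n := by
    rw [card_filter_apply_mem, ← Nat.card_eq_card_toFinset, Fintype.card_fin,
      add_tsub_cancel_right]
    rfl
  have hdensity := card_mul_card_le_of_forall_sub_notMem hH.nonneg hH hE
  rw [hcardE, card_unitHyperbola, Fintype.card_fun, Fintype.card_fin, add_tsub_cancel_right]
    at hdensity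
  push_cast at hdensity
  set u : ℝ := (Fintype.card Rˣ : ℝ)
  set q : ℝ := (Fintype.card R : ℝ)
  set s : ℝ := u ^ ((n : ℝ) / 2)
  have hu : 0 < u := by positivity
  have hs : 0 < s := by positivity
  have hroot : (u ^ n) ^ ((1 : ℝ) / 2) = s := by
    rw [← Real.rpow_natCast, ← Real.rpow_mul hu.le, mul_one_div]
  have hsq : u ^ n = s * s := by
    rw [← Real.rpow_add hu, add_halves, Real.rpow_natCast]
  rw [hroot, hsq] at hdensity
  have hexp : (((n + 1 : ℕ) : ℝ) - 1) / 2 = n / 2 := by push_cast; ring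
  rw [hexp, le_div_iff₀ hs]
  refine le_of_mul_le_mul_left ?_ (by positivity : 0 < s * q ^ n)
  calc s * q ^ n * (Nat.card S * s) = s * s * (Nat.card S * q ^ n) := by ring
    _ ≤ C * s * q ^ (n + 1) := hdensity
    _ = s * q ^ n * (C * q) := by ring

/-- If the generalized hyperbola `H_1 = {x ∈ R^d : x_1 x_2 ⋯ x_d = 1}` is `C`-Salem, then
every proper left ideal and every proper right ideal `I` of `R` satisfies
`|I| ≤ C·q / |R^×|^{(d-1)/2}` with `q = |R|`. -/
theorem stmt7 {R : Type} [Ring R] [Fintype R] [DecidableEq R] (d : ℕ) (hd : 1 ≤ d) (C : ℝ)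
    (hSalem : ∀ ψ : AddChar (Fin d → R) ℂ, ψ ≠ 1 →
      ‖∑ x ∈ Finset.univ.filter (fun x : Fin d → R => (List.ofFn x).prod = 1), ψ x‖
        ≤ C * ((Finset.univ.filter
            (fun x : Fin d → R => (List.ofFn x).prod = 1)).card : ℝ) ^ ((1 : ℝ) / 2)) :
    (∀ I : Submodule R R, I ≠ ⊤ →
      (Nat.card I : ℝ) ≤ C * (Fintype.card R : ℝ) /
        (Fintype.card Rˣ : ℝ) ^ (((d : ℝ) - 1) / 2))
    ∧ (∀ I : Submodule Rᵐᵒᵖ R, I ≠ ⊤ →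
      (Nat.card I : ℝ) ≤ C * (Fintype.card R : ℝ) /
        (Fintype.card Rˣ : ℝ) ^ (((d : ℝ) - 1) / 2)) := by
  obtain ⟨m, rfl⟩ := Nat.exists_eq_add_one_of_ne_zero (Nat.one_le_iff_ne_zero.1 hd)
  refine ⟨fun I hI => ?_, fun I hI => ?_⟩
  · refine card_le_of_isSalem_unitHyperbola hSalem I.toAddSubgroup
      ((Ideal.ne_top_iff_one I).1 hI) (Fin.last m) fun x hx => ?_
    rw [List.ofFn_succ', List.prod_concat]
    exact Ideal.mul_mem_left I _ hx
  · have hone : (1 : R) ∉ I := fun h =>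
      hI (eq_top_iff.2 fun r _ => by simpa using I.smul_mem (MulOpposite.op r) h)
    refine card_le_of_isSalem_unitHyperbola hSalem I.toAddSubgroup hone 0 fun x hx => ?_
    rw [List.ofFn_succ, List.prod_cons]
    simpa using I.smul_mem (MulOpposite.op _) hx
end

section
/- Let F be a finite field of odd characteristic, d ≥ 2, and let p(x_1,...,x_{d-1}) = x_1^2 + ... + x_{d-1}^2 over R = M_2(F). Let V_{p,0} = {(X_1,...,X_d) ∈ R^d : X_d = p(X_1,...,X_{d-1})}. Then there exists a nontrivial additive character ψ of R^d such that (|R|^d / |V_{p,0}|^{1/2}) · |V̂_{p,0}(ψ)| ≥ |F|^{(d-1)/2}. Consequently, for any fixed C, V_{p,0} is C-Salem over M_2(F) for only finitely many finite fields F of odd characteristic. -/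
/-!
Take `ψ(X₁, …, X_d) = ψ₁((X₁ + ⋯ + X_d)₀₀)` for a primitive additive character `ψ₁` of `F`.
On the graph `V` of `X ↦ X₁² + ⋯ + X_{d-1}²` the character sum factors into `d - 1` copies of
`∑_C ψ₁(C₀₀ + (C²)₀₀)` over `C ∈ M₂(F)`. As `(C²)₀₀ = a² + bc` for `C = [[a, b], [c, e]]`,
the variables `b, c, e` contribute `|F|²` and leave the Gauss sum `∑_a ψ₁(a + a²)`, of modulus
`|F|^{1/2}`. So `|V̂(ψ)| = |F|^{5(d-1)/2} / |R|^d` while `|V| = |R|^{d-1} = |F|^{4(d-1)}`, and a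
`C`-Salem bound forces `|F|^{(d-1)/2} ≤ C`.
-/

open Finset

namespace AddChar

lemma map_sum_eq_prod {ι A M : Type*} [AddCommMonoid A] [CommMonoid M] (ψ : AddChar A M)
    (s : Finset ι) (f : ι → A) : ψ (∑ i ∈ s, f i) = ∏ i ∈ s, ψ (f i) := by
  classical
  induction s using Finset.induction_on with
  | empty => simp
  | insert a s ha ih => rw [sum_insert ha, prod_insert ha, map_add_eq_mul, ih]

lemma sq_norm_sum_quadratic_eq_card {F : Type*} [Field F] [Fintype F] [DecidableEq F]
    (hF : ringChar F ≠ 2) {ψ : AddChar F ℂ} (hψ : ψ.IsPrimitive) {a : F} (ha : a ≠ 0) (b : F) :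
    ‖∑ x, ψ (a * x ^ 2 + b * x)‖ ^ 2 = Fintype.card F := by
  set f : F → F := fun x => a * x ^ 2 + b * x
  have h2a : 2 * a ≠ 0 := mul_ne_zero (Ring.two_ne_zero hF) ha
  -- `f (t + y) - f y` is affine in `y` with slope `2 a t`, so summing over `y` detects `t = 0`.
  have hdiff : ∀ t : F, ∑ y, ψ (f (t + y) - f y) = if t = 0 then (Fintype.card F : ℂ) else 0 := by
    intro t
    have hshift : ∀ y, f (t + y) - f y = f t + y * (2 * a * t) := fun y => by ring
    simp_rw [hshift, map_add_eq_mul, ← mul_sum, sum_mulShift _ hψ, mul_eq_zero_iff_left h2a]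
    split_ifs with ht <;> simp [ht, f]
  have hcomplex : ((‖∑ x, ψ (f x)‖ ^ 2 : ℝ) : ℂ) = Fintype.card F := by
    calc ((‖∑ x, ψ (f x)‖ ^ 2 : ℝ) : ℂ)
        = (∑ x, ψ (f x)) * starRingEnd ℂ (∑ y, ψ (f y)) := by
          rw [Complex.mul_conj']; push_cast; rfl
      _ = ∑ y, ∑ t, ψ (f (t + y) - f y) := by
          simp_rw [map_sum, ← map_neg_eq_conj, sum_mul_sum, ← map_add_eq_mul, ← sub_eq_add_neg]
          rw [sum_comm]
          exact sum_congr rfl fun y _ => (Equiv.sum_comp (Equiv.addRight y) _).symm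
      _ = Fintype.card F := by
          rw [sum_comm]; simp_rw [hdiff]; simp
  exact_mod_cast hcomplex

end AddChar

section Graph
variable {α β : Type*} [Fintype α] [Fintype β] [DecidableEq β]

lemma sum_filter_graph {γ : Type*} [AddCommMonoid γ] (f : α → β) (g : α × β → γ) :
    ∑ x ∈ univ.filter (fun x : α × β => x.2 = f x.1), g x = ∑ a, g (a, f a) := by
  simp [sum_filter, Fintype.sum_prod_type, sum_ite_eq']

lemma card_filter_graph (f : α → β) :
    #(univ.filter (fun x : α × β => x.2 = f x.1)) = Fintype.card α := by
  rw [card_eq_sum_ones, sum_filter_graph]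
  simp

end Graph

namespace AddMonoidHom
variable {R A : Type*} [AddCommMonoid R] [AddCommMonoid A]

def sumComponents (ℓ : R →+ A) (n : ℕ) : (Fin n → R) × R →+ A :=
  (∑ i, ℓ.comp (Pi.evalAddMonoidHom _ i)).coprod ℓ

@[simp] lemma sumComponents_apply (ℓ : R →+ A) (n : ℕ) (x : (Fin n → R) × R) :
    ℓ.sumComponents n x = ∑ i, ℓ (x.1 i) + ℓ x.2 := by
  simp [sumComponents, finsetSum_apply]

end AddMonoidHom

lemma sum_graph_addChar_sumComponents_eq_pow {R A M : Type*} [AddCommMonoid R] [Fintype R]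
    [DecidableEq R] [AddCommMonoid A] [CommSemiring M] (ψ : AddChar A M) (ℓ : R →+ A)
    (f : R → R) (n : ℕ) :
    ∑ x ∈ univ.filter (fun x : (Fin n → R) × R => x.2 = ∑ i, f (x.1 i)),
        ψ.compAddMonoidHom (ℓ.sumComponents n) x
      = (∑ r, ψ (ℓ r + ℓ (f r))) ^ n := by
  rw [sum_filter_graph (fun X : Fin n → R => ∑ i, f (X i)), Fintype.sum_pow]
  refine sum_congr rfl fun X _ => ?_
  rw [AddChar.compAddMonoidHom_apply, AddMonoidHom.sumComponents_apply, map_sum,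
    ← sum_add_distrib, AddChar.map_sum_eq_prod]

def Matrix.finTwoEquivProd (α : Type*) : (α × α) × (α × α) ≃ Matrix (Fin 2) (Fin 2) α where
  toFun p := !![p.1.1, p.1.2; p.2.1, p.2.2]
  invFun M := ((M 0 0, M 0 1), (M 1 0, M 1 1))
  left_inv _ := by simp
  right_inv M := (Matrix.eta_fin_two M).symm

section PrimitiveChar
variable {R R' : Type*} [CommRing R] [Fintype R] [DecidableEq R] [CommRing R'] [IsDomain R']
  {ψ : AddChar R R'}

lemma AddChar.sum_sum_mul_eq_card (hψ : ψ.IsPrimitive) :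
    ∑ b, ∑ c, ψ (b * c) = Fintype.card R := by
  rw [sum_comm]
  simp_rw [AddChar.sum_mulShift _ hψ]
  simp

lemma AddChar.sum_matrix_entry_add_sq_entry (hψ : ψ.IsPrimitive) :
    ∑ C : Matrix (Fin 2) (Fin 2) R, ψ (C 0 0 + (C ^ 2) 0 0)
      = (Fintype.card R : R') ^ 2 * ∑ x, ψ (x + x ^ 2) := by
  have hsplit : ∀ a b c : R, ψ (a + (a * a + b * c)) = ψ (a + a * a) * ψ (b * c) :=
    fun a b c => by rw [← add_assoc, AddChar.map_add_eq_mul]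
  rw [← (Matrix.finTwoEquivProd R).sum_comp]
  simp only [Matrix.finTwoEquivProd, Equiv.coe_fn_mk, sq, Matrix.mul_fin_two, Matrix.of_apply,
    Matrix.cons_val', Matrix.cons_val_zero, Fintype.sum_prod_type, hsplit]
  calc ∑ a, ∑ b, ∑ c, ∑ _d : R, ψ (a + a * a) * ψ (b * c)
      = ∑ a, ψ (a + a * a) * (Fintype.card R * ∑ b, ∑ c, ψ (b * c)) := by
        simp [mul_sum, sum_const, mul_left_comm]
    _ = _ := by
        rw [AddChar.sum_sum_mul_eq_card hψ, mul_sum]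
        exact sum_congr rfl fun a _ => by ring

end PrimitiveChar

lemma card_matrix_fin_two (F : Type*) [Fintype F] :
    Fintype.card (Matrix (Fin 2) (Fin 2) F) = Fintype.card F ^ 4 := by
  change Fintype.card (Fin 2 → Fin 2 → F) = _
  rw [Fintype.card_pi_const, Fintype.card_pi_const, ← pow_mul]

lemma card_paraboloid (n : ℕ) (F : Type*) [Ring F] [Fintype F] [DecidableEq F] :
    #(univ.filter (fun x : (Fin n → Matrix (Fin 2) (Fin 2) F) × Matrix (Fin 2) (Fin 2) F =>
        x.2 = ∑ i, (x.1 i) ^ 2)) = (Fintype.card F ^ 4) ^ n := by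
  rw [card_filter_graph (fun X : Fin n → Matrix (Fin 2) (Fin 2) F => ∑ i, (X i) ^ 2),
    Fintype.card_pi_const, card_matrix_fin_two]

theorem exists_addChar_norm_sum_paraboloid (n : ℕ) (F : Type*) [Field F] [Fintype F]
    [DecidableEq F] (hF : ringChar F ≠ 2) :
    ∃ ψ : AddChar ((Fin n → Matrix (Fin 2) (Fin 2) F) × Matrix (Fin 2) (Fin 2) F) ℂ, ψ ≠ 1 ∧
      ‖∑ x ∈ univ.filter
          (fun x : (Fin n → Matrix (Fin 2) (Fin 2) F) × Matrix (Fin 2) (Fin 2) F =>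
            x.2 = ∑ i, (x.1 i) ^ 2), ψ x‖
        = ((Fintype.card F : ℝ) ^ 2 * √(Fintype.card F)) ^ n := by
  set ψ₁ := AddChar.FiniteField.primitiveChar_to_Complex F
  have hψ₁ : ψ₁.IsPrimitive := AddChar.FiniteField.primitiveChar_to_Complex_isPrimitive F
  -- `ℓ C = C₀₀ = Tr(E₁₁ C)`: this is the paper's character `ψ₁(Tr(A X₁ + ⋯ + A X_d))`, `A = E₁₁`.
  set ℓ := Matrix.entryAddMonoidHom F (0 : Fin 2) (0 : Fin 2)
  refine ⟨ψ₁.compAddMonoidHom (ℓ.sumComponents n), ?_, ?_⟩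
  · obtain ⟨a, ha⟩ := AddChar.ne_one_iff.mp (by simpa using hψ₁ one_ne_zero : ψ₁ ≠ 1)
    refine AddChar.ne_one_iff.mpr ⟨(0, Matrix.of fun _ _ => a), ?_⟩
    simpa [ℓ] using ha
  · rw [sum_graph_addChar_sumComponents_eq_pow ψ₁ ℓ (· ^ 2)]
    have hquad := AddChar.sq_norm_sum_quadratic_eq_card hF hψ₁ one_ne_zero 1
    simp only [one_mul] at hquad
    simp only [ℓ, Matrix.entryAddMonoidHom_apply, AddChar.sum_matrix_entry_add_sq_entry hψ₁,
      norm_pow, norm_mul, Complex.norm_natCast, add_comm _ (_ ^ 2)]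
    rw [← Real.sqrt_sq (norm_nonneg _), hquad]

lemma rpow_half_pow_four_pow {x : ℝ} (n : ℕ) :
    ((x ^ 4) ^ n) ^ ((1 : ℝ) / 2) = (x ^ 2) ^ n := by
  rw [← Real.sqrt_eq_rpow, show (x ^ 4) ^ n = ((x ^ 2) ^ n) ^ 2 by ring,
    Real.sqrt_sq (by positivity)]

lemma le_sq_of_sqrt_pow_le {q C : ℝ} (hq : 1 ≤ q) {n : ℕ} (hn : n ≠ 0) (h : √q ^ n ≤ C) :
    q ≤ C ^ 2 := by
  have hsqrt : 1 ≤ √q := Real.one_le_sqrt.mpr hq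
  calc q = √q ^ 2 := (Real.sq_sqrt (by linarith)).symm
    _ ≤ C ^ 2 := pow_le_pow_left₀ (by positivity) ((le_self_pow₀ hsqrt hn).trans h) 2

/-- Over `R = M₂(F)` (`F` a finite field of odd characteristic), the paraboloid
`V_{p,0} = {(X₁,…,X_d) : X_d = X₁² + ⋯ + X_{d-1}²} ⊆ R^d` admits a nontrivial additive
character `ψ` with `(|R|^d/|V_{p,0}|^{1/2})·|V̂_{p,0}(ψ)| ≥ |F|^{(d-1)/2}`; consequently,
for any fixed `C`, `V_{p,0}` is `C`-Salem over `M₂(F)` for only finitely many (i.e.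
boundedly-sized) finite fields `F` of odd characteristic. -/
theorem stmt18 (d : ℕ) (hd : 2 ≤ d) :
    (∀ (F : Type) [Field F] [Fintype F] [DecidableEq F], ringChar F ≠ 2 →
      ∃ ψ : AddChar ((Fin (d - 1) → Matrix (Fin 2) (Fin 2) F) × Matrix (Fin 2) (Fin 2) F) ℂ,
        ψ ≠ 1 ∧
        ((Fintype.card (Matrix (Fin 2) (Fin 2) F) : ℝ) ^ d /
            ((Finset.univ.filter
              (fun x : (Fin (d - 1) → Matrix (Fin 2) (Fin 2) F) × Matrix (Fin 2) (Fin 2) F =>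
                x.2 = ∑ i, (x.1 i) ^ 2)).card : ℝ) ^ ((1 : ℝ) / 2)) *
          ‖((Fintype.card (Matrix (Fin 2) (Fin 2) F) : ℂ) ^ d)⁻¹ *
            ∑ x ∈ Finset.univ.filter
              (fun x : (Fin (d - 1) → Matrix (Fin 2) (Fin 2) F) × Matrix (Fin 2) (Fin 2) F =>
                x.2 = ∑ i, (x.1 i) ^ 2), ψ x‖
          ≥ (Fintype.card F : ℝ) ^ (((d : ℝ) - 1) / 2))
    ∧ ∀ C : ℝ, ∃ N : ℕ, ∀ (F : Type) [Field F] [Fintype F] [DecidableEq F],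
        ringChar F ≠ 2 →
        (∀ ψ : AddChar
            ((Fin (d - 1) → Matrix (Fin 2) (Fin 2) F) × Matrix (Fin 2) (Fin 2) F) ℂ,
          ψ ≠ 1 →
          ‖∑ x ∈ Finset.univ.filter
              (fun x : (Fin (d - 1) → Matrix (Fin 2) (Fin 2) F) × Matrix (Fin 2) (Fin 2) F =>
                x.2 = ∑ i, (x.1 i) ^ 2), ψ x‖
            ≤ C * ((Finset.univ.filter
              (fun x : (Fin (d - 1) → Matrix (Fin 2) (Fin 2) F) × Matrix (Fin 2) (Fin 2) F =>
                x.2 = ∑ i, (x.1 i) ^ 2)).card : ℝ) ^ ((1 : ℝ) / 2)) →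
        Fintype.card F ≤ N := by
  refine ⟨fun F _ _ _ hF => ?_, fun C => ⟨⌈C ^ 2⌉₊, fun F _ _ _ hF hsalem => ?_⟩⟩
  · obtain ⟨ψ, hψ, hnorm⟩ := exists_addChar_norm_sum_paraboloid (d - 1) F hF
    refine ⟨ψ, hψ, le_of_eq ?_⟩
    have hq : (0 : ℝ) < Fintype.card F := by exact_mod_cast Fintype.card_pos
    rw [card_paraboloid, card_matrix_fin_two, norm_mul, hnorm, ← Nat.cast_pred (by omega),
      Real.rpow_div_two_eq_sqrt _ hq.le]
    push_cast
    rw [rpow_half_pow_four_pow, norm_inv, norm_pow, norm_pow, Complex.norm_natCast,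
      Real.rpow_natCast]
    field_simp
    ring
  · obtain ⟨ψ, hψ, hnorm⟩ := exists_addChar_norm_sum_paraboloid (d - 1) F hF
    have hq : (1 : ℝ) ≤ Fintype.card F := by exact_mod_cast Fintype.card_pos
    have hbound := hsalem ψ hψ
    rw [hnorm, card_paraboloid] at hbound
    push_cast at hbound
    rw [rpow_half_pow_four_pow, mul_pow, mul_comm C] at hbound
    have hsqrt : √(Fintype.card F : ℝ) ^ (d - 1) ≤ C := le_of_mul_le_mul_left hbound (by positivity)
    exact_mod_cast (le_sq_of_sqrt_pow_le hq (by omega) hsqrt).trans (Nat.le_ceil _)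
end
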